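/- arXiv:2011.00482 — 2 statements merged into one kernel-verified Lean document; each statement's English description precedes it below -/
import Mathlib

section
/- None of the composites β∘γ, γ∘α, α∘β, and α∘β∘γ has a fixed point on T⁷; that is, for every x ∈ T⁷ one has β(γ(x)) ≠ x, γ(α(x)) ≠ x, α(β(x)) ≠ x, and α(β(γ(x))) ≠ x. -/
/-- The 7-torus `T⁷ = (ℝ/ℤ)⁷`. -/
abbrev T7 := Fin 7 → AddCircle (1 : ℝ)

/-- The class of `½` in `ℝ/ℤ`. -/
noncomputable def half : AddCircle (1 : ℝ) := ((1 / 2 : ℝ) : AddCircle (1 : ℝ))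

/-- `α(x) = (−x₁, −x₂, −x₃, −x₄, x₅, x₆, x₇)`. -/
noncomputable def α (x : T7) : T7 := ![-x 0, -x 1, -x 2, -x 3, x 4, x 5, x 6]

/-- `β(x) = (−x₁, ½−x₂, x₃, x₄, −x₅, −x₆, −x₇)`. -/
noncomputable def β (x : T7) : T7 := ![-x 0, half - x 1, x 2, x 3, -x 4, -x 5, -x 6]

/-- `γ(x) = (½−x₁, x₂, ½−x₃, x₄, −x₅, x₆, −x₇)`. -/
noncomputable def γ (x : T7) : T7 := ![half - x 0, x 1, half - x 2, x 3, -x 4, x 5, -x 6]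

lemma half_ne_zero : half ≠ 0 := by
  rw [half, Ne, AddCircle.coe_eq_zero_iff_of_mem_Ico ⟨by norm_num, by norm_num⟩]
  norm_num

/-- None of `β∘γ`, `γ∘α`, `α∘β`, `α∘β∘γ` has a fixed point on `T⁷`. -/
theorem stmt4 (x : T7) :
    β (γ x) ≠ x ∧ γ (α x) ≠ x ∧ α (β x) ≠ x ∧ α (β (γ x)) ≠ x := by
  -- On one coordinate each composite is a translation by `½`.
  refine ⟨fun h => ?_, fun h => ?_, fun h => ?_, fun h => ?_⟩ <;> apply half_ne_zero
  · simpa [β, γ] using congrFun h 0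
  · simpa [γ, α] using congrFun h 0
  · simpa [α, β] using congrFun h 1
  · simpa [α, β, γ] using congrFun h 1
end

section
/- The fixed-point set of γ in T⁷ equals {x ∈ T⁷ : 2·x₁ = ½, 2·x₃ = ½, 2·x₅ = 0, 2·x₇ = 0}, i.e. the set of x with x₁, x₃ ∈ {¼, ¾} and x₅, x₇ ∈ {0, ½} in ℝ/ℤ. Consequently, Fix(γ) is a union of 16 pairwise disjoint sets, one for each choice of (x₁, x₃, x₅, x₇) ∈ {¼,¾} × {¼,¾} × {0,½} × {0,½}, and each of these sets (on which x₂, x₄, x₆ are unconstrained) is homeomorphic to the 3-torus (ℝ/ℤ)³. -/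
/-- The class of `¼` in `ℝ/ℤ`. -/
noncomputable def quarter : AddCircle (1 : ℝ) := ((1 / 4 : ℝ) : AddCircle (1 : ℝ))

/-- The class of `¾` in `ℝ/ℤ`. -/
noncomputable def threeQuarter : AddCircle (1 : ℝ) := ((3 / 4 : ℝ) : AddCircle (1 : ℝ))

/-- The 3-torus in `T⁷` on which `(x₁, x₃, x₅, x₇)` is fixed to the value `p`
(and `x₂, x₄, x₆` are unconstrained). -/
def Gset (p : AddCircle (1 : ℝ) × AddCircle (1 : ℝ) × AddCircle (1 : ℝ) × AddCircle (1 : ℝ)) :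
    Set T7 :=
  {x | x 0 = p.1 ∧ x 2 = p.2.1 ∧ x 4 = p.2.2.1 ∧ x 6 = p.2.2.2}

/-- The index set `{¼,¾} × {¼,¾} × {0,½} × {0,½}` of the 16 fixed 3-tori of `γ`. -/
noncomputable def Qset :
    Set (AddCircle (1 : ℝ) × AddCircle (1 : ℝ) × AddCircle (1 : ℝ) × AddCircle (1 : ℝ)) :=
  {p | (p.1 = quarter ∨ p.1 = threeQuarter) ∧ (p.2.1 = quarter ∨ p.2.1 = threeQuarter) ∧
       (p.2.2.1 = 0 ∨ p.2.2.1 = half) ∧ (p.2.2.2 = 0 ∨ p.2.2.2 = half)}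

lemma coe_eq_coe (s t : ℝ) : (s : AddCircle (1:ℝ)) = t ↔ ∃ k : ℤ, s - t = k := by
  rw [QuotientAddGroup.eq_iff_sub_mem, AddSubgroup.mem_zmultiples_iff]
  simp [eq_comm]

lemma two_smul_eq_half_iff (a : AddCircle (1:ℝ)) :
    2 • a = half ↔ a = quarter ∨ a = threeQuarter := by
  induction a using QuotientAddGroup.induction_on with
  | H r =>
    have h2 : (2:ℕ) • ((r : AddCircle (1:ℝ))) = ((2*r : ℝ) : AddCircle (1:ℝ)) := by
      push_cast [two_smul, ← QuotientAddGroup.mk_add]; ring_nf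
    rw [h2, half, quarter, threeQuarter, coe_eq_coe, coe_eq_coe, coe_eq_coe]
    constructor
    · rintro ⟨k, hk⟩
      rcases Int.even_or_odd k with ⟨m, hm⟩ | ⟨m, hm⟩
      · left; exact ⟨m, by subst hm; push_cast at hk ⊢; linarith⟩
      · right; exact ⟨m, by subst hm; push_cast at hk ⊢; linarith⟩
    · rintro (⟨k, hk⟩ | ⟨k, hk⟩)
      · exact ⟨2*k, by push_cast; linarith⟩
      · exact ⟨2*k+1, by push_cast; linarith⟩

lemma two_smul_eq_zero_iff (a : AddCircle (1:ℝ)) :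
    2 • a = 0 ↔ a = 0 ∨ a = half := by
  induction a using QuotientAddGroup.induction_on with
  | H r =>
    have h2 : (2:ℕ) • ((r : AddCircle (1:ℝ))) = ((2*r : ℝ) : AddCircle (1:ℝ)) := by
      push_cast [two_smul, ← QuotientAddGroup.mk_add]; ring_nf
    have h0 : (0 : AddCircle (1:ℝ)) = ((0:ℝ) : AddCircle (1:ℝ)) := rfl
    rw [h2, half, h0, coe_eq_coe, coe_eq_coe, coe_eq_coe]
    constructor
    · rintro ⟨k, hk⟩
      rcases Int.even_or_odd k with ⟨m, hm⟩ | ⟨m, hm⟩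
      · left; exact ⟨m, by subst hm; push_cast at hk ⊢; linarith⟩
      · right; exact ⟨m, by subst hm; push_cast at hk ⊢; linarith⟩
    · rintro (⟨k, hk⟩ | ⟨k, hk⟩)
      · exact ⟨2*k, by push_cast; linarith⟩
      · exact ⟨2*k+1, by push_cast; linarith⟩

lemma q_ne : quarter ≠ threeQuarter := by
  rw [quarter, threeQuarter, Ne, coe_eq_coe]
  rintro ⟨k, hk⟩
  have h1 : ((2*k : ℤ) : ℝ) = -1 := by push_cast; linarith
  have h2 : (2*k : ℤ) = -1 := by exact_mod_cast h1
  omega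

lemma zero_ne_half : (0 : AddCircle (1:ℝ)) ≠ half := by
  have h0 : (0 : AddCircle (1:ℝ)) = ((0:ℝ) : AddCircle (1:ℝ)) := rfl
  rw [h0, half, Ne, coe_eq_coe]
  rintro ⟨k, hk⟩
  have h1 : ((2*k : ℤ) : ℝ) = -1 := by push_cast; linarith
  have h2 : (2*k : ℤ) = -1 := by exact_mod_cast h1
  omega

lemma sub_eq_self_iff (c a : AddCircle (1:ℝ)) : c - a = a ↔ 2 • a = c := by
  rw [sub_eq_iff_eq_add, two_smul, eq_comm]

lemma neg_eq_self_iff (a : AddCircle (1:ℝ)) : -a = a ↔ 2 • a = 0 := by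
  rw [neg_eq_iff_add_eq_zero, two_smul]

lemma fix_iff (x : T7) : γ x = x ↔
    (2 • x 0 = half ∧ 2 • x 2 = half ∧ 2 • x 4 = 0 ∧ 2 • x 6 = 0) := by
  constructor
  · intro h
    refine ⟨?_, ?_, ?_, ?_⟩
    · exact (sub_eq_self_iff half (x 0)).1 (congrFun h 0)
    · exact (sub_eq_self_iff half (x 2)).1 (congrFun h 2)
    · exact (neg_eq_self_iff (x 4)).1 (congrFun h 4)
    · exact (neg_eq_self_iff (x 6)).1 (congrFun h 6)
  · rintro ⟨h0, h2, h4, h6⟩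
    funext i
    fin_cases i
    · exact (sub_eq_self_iff half (x 0)).2 h0
    · rfl
    · exact (sub_eq_self_iff half (x 2)).2 h2
    · rfl
    · exact (neg_eq_self_iff (x 4)).2 h4
    · rfl
    · exact (neg_eq_self_iff (x 6)).2 h6

lemma ncard_prod {X Y : Type*} (s : Set X) (t : Set Y) :
    (s ×ˢ t).ncard = s.ncard * t.ncard := by
  rw [← Nat.card_coe_set_eq, ← Nat.card_coe_set_eq, ← Nat.card_coe_set_eq,
    Nat.card_congr (Equiv.Set.prod s t), Nat.card_prod]

noncomputable def GHomeo (p : AddCircle (1:ℝ) × AddCircle (1:ℝ) × AddCircle (1:ℝ) × AddCircle (1:ℝ)) :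
    Gset p ≃ₜ (Fin 3 → AddCircle (1 : ℝ)) where
  toFun y := ![y.1 1, y.1 3, y.1 5]
  invFun v := ⟨![p.1, v 0, p.2.1, v 1, p.2.2.1, v 2, p.2.2.2], by
    refine ⟨?_, ?_, ?_, ?_⟩ <;> rfl⟩
  left_inv y := by
    obtain ⟨h0, h2, h4, h6⟩ := y.2
    apply Subtype.ext
    funext i
    fin_cases i
    · exact h0.symm
    · rfl
    · exact h2.symm
    · rfl
    · exact h4.symm
    · rfl
    · exact h6.symm
  right_inv v := by
    funext i
    fin_cases i <;> rfl
  continuous_toFun := by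
    refine continuous_pi fun i => ?_
    fin_cases i
    · exact (continuous_apply (1 : Fin 7)).comp continuous_subtype_val
    · exact (continuous_apply (3 : Fin 7)).comp continuous_subtype_val
    · exact (continuous_apply (5 : Fin 7)).comp continuous_subtype_val
  continuous_invFun := by
    refine Continuous.subtype_mk (continuous_pi fun i => ?_) _
    fin_cases i
    · exact continuous_const
    · exact continuous_apply (0 : Fin 3)
    · exact continuous_const
    · exact continuous_apply (1 : Fin 3)
    · exact continuous_const
    · exact continuous_apply (2 : Fin 3)
    · exact continuous_const

/-- The fixed-point set of `γ` in `T⁷` is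
`{x : 2·x₁ = ½, 2·x₃ = ½, 2·x₅ = 0, 2·x₇ = 0}`; it is the union of the 16 pairwise
disjoint sets indexed by `(x₁, x₃, x₅, x₇) ∈ {¼,¾} × {¼,¾} × {0,½} × {0,½}`, each
homeomorphic to the 3-torus `(ℝ/ℤ)³`. -/
theorem stmt6 :
    ({x : T7 | γ x = x} =
      {x : T7 | 2 • x 0 = half ∧ 2 • x 2 = half ∧ 2 • x 4 = 0 ∧ 2 • x 6 = 0}) ∧
    ({x : T7 | γ x = x} = ⋃ p ∈ Qset, Gset p) ∧
    (∀ p ∈ Qset, ∀ q ∈ Qset, p ≠ q → Disjoint (Gset p) (Gset q)) ∧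
    Qset.ncard = 16 ∧
    (∀ p ∈ Qset, Nonempty (Gset p ≃ₜ (Fin 3 → AddCircle (1 : ℝ)))) := by
  refine ⟨?_, ?_, ?_, ?_, fun p _ => ⟨GHomeo p⟩⟩
  · ext x; exact fix_iff x
  · ext x
    simp only [Set.mem_setOf_eq, Set.mem_iUnion, fix_iff]
    constructor
    · rintro ⟨h0, h2, h4, h6⟩
      refine ⟨(x 0, x 2, x 4, x 6), ?_, rfl, rfl, rfl, rfl⟩
      exact ⟨(two_smul_eq_half_iff _).1 h0, (two_smul_eq_half_iff _).1 h2,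
        (two_smul_eq_zero_iff _).1 h4, (two_smul_eq_zero_iff _).1 h6⟩
    · rintro ⟨p, ⟨hp1, hp2, hp3, hp4⟩, hx0, hx2, hx4, hx6⟩
      rw [hx0, hx2, hx4, hx6]
      exact ⟨(two_smul_eq_half_iff _).2 hp1, (two_smul_eq_half_iff _).2 hp2,
        (two_smul_eq_zero_iff _).2 hp3, (two_smul_eq_zero_iff _).2 hp4⟩
  · intro p _ q _ hpq
    rw [Set.disjoint_left]
    rintro x ⟨h0, h2, h4, h6⟩ ⟨k0, k2, k4, k6⟩
    exact hpq (Prod.ext (h0 ▸ k0) (Prod.ext (h2 ▸ k2) (Prod.ext (h4 ▸ k4) (h6 ▸ k6))))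
  · have e : Qset = ({quarter, threeQuarter} : Set (AddCircle (1:ℝ))) ×ˢ
        (({quarter, threeQuarter} : Set (AddCircle (1:ℝ))) ×ˢ
          (({0, half} : Set (AddCircle (1:ℝ))) ×ˢ ({0, half} : Set (AddCircle (1:ℝ))))) := by
      ext ⟨a, b, c, d⟩
      simp [Qset, Set.mem_prod]
    rw [e, ncard_prod, ncard_prod, ncard_prod,
      Set.ncard_pair q_ne, Set.ncard_pair zero_ne_half]
end
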